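/- arXiv:1703.07589 — 5 statements merged into one kernel-verified Lean document; each statement's English description precedes it below -/
import Mathlib

section
/- If M is a symmetric positive semidefinite block matrix with blocks A (top-left), B (top-right), Bᵀ (bottom-left), D (bottom-right), then the generalized Schur complement A - B D† Bᵀ (where D† is the Moore–Penrose pseudoinverse of D) is positive semidefinite. -/
/-!
Conjugating `M` by `X = [1; -D† Bᵀ]` gives `Xᵀ M X = A - B D† Bᵀ`, using only `D† D D† = D†`,
so the Schur complement is positive semidefinite as a congruence of `M`. That `Xᵀ = [1, -B D†]`
needs `D†` symmetric: as `D` is symmetric, `(D†)ᵀ` is again a Moore–Penrose inverse of `D`, and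
Moore–Penrose inverses are unique.
-/

open Matrix

/-- The four Moore–Penrose conditions: `Dp` is the Moore–Penrose pseudoinverse of `D`. -/
def IsMP {α : Type*} [Fintype α] [DecidableEq α] (D Dp : Matrix α α ℝ) : Prop :=
  D * Dp * D = D ∧ Dp * D * Dp = Dp ∧ (D * Dp)ᵀ = D * Dp ∧ (Dp * D)ᵀ = Dp * D

namespace IsMP

variable {α : Type*} [Fintype α] [DecidableEq α] {D P Q : Matrix α α ℝ}

theorem transpose (h : IsMP D P) : IsMP Dᵀ Pᵀ := by
  obtain ⟨h₁, h₂, h₃, h₄⟩ := h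
  refine ⟨?_, ?_, ?_, ?_⟩
  · rw [← transpose_mul, ← transpose_mul, ← Matrix.mul_assoc, h₁]
  · rw [← transpose_mul, ← transpose_mul, ← Matrix.mul_assoc, h₂]
  · rw [← transpose_mul, h₄, h₄]
  · rw [← transpose_mul, h₃, h₃]

theorem eq_mul_mul (hP : IsMP D P) (hQ : IsMP D Q) : P = P * D * Q :=
  calc P = P * (D * P)ᵀ := by rw [hP.2.2.1, ← Matrix.mul_assoc, hP.2.1]
    _ = P * Pᵀ * (D * Q * D)ᵀ := by rw [hQ.1, transpose_mul, Matrix.mul_assoc]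
    _ = P * (D * P)ᵀ * (D * Q)ᵀ := by simp only [transpose_mul, Matrix.mul_assoc]
    _ = P * D * P * D * Q := by rw [hP.2.2.1, hQ.2.2.1]; simp only [Matrix.mul_assoc]
    _ = P * D * Q := by rw [hP.2.1]

theorem unique (hP : IsMP D P) (hQ : IsMP D Q) : P = Q := by
  have hQ' : Qᵀ = (P * D * Q)ᵀ := by
    rw [hQ.transpose.eq_mul_mul hP.transpose]
    simp only [transpose_mul, Matrix.mul_assoc]
  rw [transpose_inj] at hQ'
  rw [hQ', ← hP.eq_mul_mul hQ]

theorem transpose_eq_self (h : IsMP D P) (hD : Dᵀ = D) : Pᵀ = P :=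
  (hD ▸ h.transpose).unique h

end IsMP

theorem fromCols_mul_fromBlocks_mul_fromRows {ι κ R : Type*} [Fintype ι] [Fintype κ]
    [DecidableEq ι] [CommRing R] (A : Matrix ι ι R) (B : Matrix ι κ R) (C : Matrix κ ι R)
    (D P : Matrix κ κ R) (hPDP : P * D * P = P) :
    fromCols (1 : Matrix ι ι R) (-(B * P)) * fromBlocks A B C D *
        fromRows (1 : Matrix ι ι R) (-(P * C)) =
      A - B * P * C := by
  have hBPDPC : B * (P * (D * (P * C))) = B * (P * C) := by
    simp only [← Matrix.mul_assoc, hPDP]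
  rw [fromCols_mul_fromBlocks, fromCols_mul_fromRows]
  simp only [Matrix.mul_one, Matrix.one_mul, Matrix.mul_neg, Matrix.neg_mul, Matrix.add_mul,
    Matrix.mul_assoc, hBPDPC]
  abel

theorem schur_complement_posSemidef {n m : ℕ}
    (A : Matrix (Fin n) (Fin n) ℝ) (B : Matrix (Fin n) (Fin m) ℝ)
    (D Dp : Matrix (Fin m) (Fin m) ℝ)
    (hM : (Matrix.fromBlocks A B Bᵀ D).PosSemidef)
    (hDp : IsMP D Dp) :
    (A - B * Dp * Bᵀ).PosSemidef := by
  have hD : Dᵀ = D := (isHermitian_fromBlocks_iff.mp hM.isHermitian).2.2.2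
  have hDpT : Dpᵀ = Dp := hDp.transpose_eq_self hD
  have hX : (fromRows (1 : Matrix (Fin n) (Fin n) ℝ) (-(Dp * Bᵀ)))ᴴ = fromCols 1 (-(B * Dp)) := by
    rw [conjTranspose_fromRows_eq_fromCols_conjTranspose]
    simp only [conjTranspose_eq_transpose_of_trivial, transpose_one, transpose_neg, transpose_mul,
      transpose_transpose, hDpT]
  simpa only [hX, fromCols_mul_fromBlocks_mul_fromRows A B Bᵀ D Dp hDp.2.1] using
    hM.conjTranspose_mul_mul_same (fromRows 1 (-(Dp * Bᵀ)))
end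

section
/- Riccati downdate propagation: suppose P̃ = P - V C† Vᵀ ⪰ 0 with C ⪰ 0 and range(Vᵀ) ⊆ range(C), P ⪰ 0, and let F = Qx + AᵀPA, G = Qw + BᵀPB, H = Qxw + AᵀPB with [[Qx,Qxw],[Qxwᵀ,Qw]] ⪰ 0. Define V' := (Aᵀ - H G† Bᵀ) V and C' := C - Vᵀ B G† Bᵀ V. Then the downdated Riccati step satisfies (F - AᵀVC†VᵀA) - (H - AᵀVC†VᵀB)(G - BᵀVC†VᵀB)†(H - AᵀVC†VᵀB)ᵀ = (F - H G† Hᵀ) - V' C'† V'ᵀ. -/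
/-!
Put `U = AᵀV`, `W = VᵀB`, `G = Qw + BᵀPB`, `H = Qxw + AᵀPB` and `M = [[C, W], [Wᵀ, G]]`.
Block elimination of `Y M = [U H]` starting with the `C` block gives a solution `Y` whose pairing
`Y [U H]ᵀ` is what the left side subtracts from `Qx + AᵀPA`; starting with the `G` block gives a
solution whose pairing is what the right side subtracts. Since `M` is symmetric, `X [U H]ᵀ = (Y [U H]ᵀ)ᵀ` for
any two solutions, and both terms are symmetric. The eliminations need range conditions such as
`C C† Vᵀ = Vᵀ`; they hold because the positivity hypotheses realize `M` and `[U H]` as Gram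
matrices `KᵀK` and `K₀ᵀK` of stacked square roots of `Q`, `P - V C† Vᵀ` and `C`.
-/

open Matrix

section MoorePenrose

variable {ι : Type*} [Fintype ι] [DecidableEq ι] {D Dp : Matrix ι ι ℝ}

theorem IsMP.transpose_s7 (h : IsMP D Dp) : IsMP Dᵀ Dpᵀ := by
  obtain ⟨h₁, h₂, h₃, h₄⟩ := h
  refine ⟨?_, ?_, ?_, ?_⟩
  · rw [← transpose_mul, ← transpose_mul, ← Matrix.mul_assoc, h₁]
  · rw [← transpose_mul, ← transpose_mul, ← Matrix.mul_assoc, h₂]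
  · rw [← transpose_mul, transpose_transpose, h₄]
  · rw [← transpose_mul, transpose_transpose, h₃]

theorem IsMP.unique_s7 {D₁ D₂ : Matrix ι ι ℝ} (h₁ : IsMP D D₁) (h₂ : IsMP D D₂) : D₁ = D₂ := by
  obtain ⟨a₁, b₁, c₁, d₁⟩ := h₁
  obtain ⟨a₂, b₂, c₂, d₂⟩ := h₂
  have hleft : D * D₁ = D * D₂ :=
    calc D * D₁ = (D * D₂ * D * D₁)ᵀ := by rw [a₂, c₁]
    _ = (D * D₁)ᵀ * (D * D₂)ᵀ := by rw [← transpose_mul, Matrix.mul_assoc (D * D₂)]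
    _ = D * D₂ := by rw [c₁, c₂, ← Matrix.mul_assoc, a₁]
  have hright : D₁ * D = D₂ * D :=
    calc D₁ * D = (D₁ * D * D₂ * D)ᵀ := by rw [Matrix.mul_assoc D₁, Matrix.mul_assoc D₁, a₂, d₁]
    _ = (D₂ * D)ᵀ * (D₁ * D)ᵀ := by rw [← transpose_mul, Matrix.mul_assoc]
    _ = D₂ * D := by rw [d₁, d₂, Matrix.mul_assoc, ← Matrix.mul_assoc D, a₁]
  calc D₁ = D₁ * D * D₁ := b₁.symm
  _ = D₂ * D * D₂ := by rw [Matrix.mul_assoc, hleft, ← Matrix.mul_assoc, hright]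
  _ = D₂ := b₂

theorem IsMP.isSymm (h : IsMP D Dp) (hD : D.IsSymm) : Dp.IsSymm :=
  (hD.eq ▸ h.transpose_s7).unique_s7 h

end MoorePenrose

theorem mul_mul_transpose_mul_self_cancel {ρ ι : Type*} [Fintype ρ] [Fintype ι] [DecidableEq ι]
    {R : Matrix ρ ι ℝ} {X : Matrix ι ι ℝ} (h : Rᵀ * R * X * (Rᵀ * R) = Rᵀ * R) :
    R * X * (Rᵀ * R) = R := by
  have h₀ : Rᴴ * R * (X * (Rᵀ * R) - 1) = 0 := by
    rw [conjTranspose_eq_transpose_of_trivial, Matrix.mul_sub, ← Matrix.mul_assoc, h,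
      Matrix.mul_one, sub_self]
  rwa [conjTranspose_mul_self_mul_eq_zero, Matrix.mul_sub, Matrix.mul_one, sub_eq_zero,
    ← Matrix.mul_assoc] at h₀

theorem solution_pairing_symm {R κ μ ν : Type*} [CommRing R] [Fintype κ] [Fintype μ]
    {C : Matrix κ κ R} {W : Matrix κ μ R} {G : Matrix μ μ R} {U : Matrix ν κ R}
    {H : Matrix ν μ R} {X₁ Y₁ : Matrix ν κ R} {X₂ Y₂ : Matrix ν μ R}
    (hC : Cᵀ = C) (hG : Gᵀ = G)
    (hX₁ : X₁ * C + X₂ * Wᵀ = U) (hX₂ : X₁ * W + X₂ * G = H)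
    (hY₁ : Y₁ * C + Y₂ * Wᵀ = U) (hY₂ : Y₁ * W + Y₂ * G = H) :
    X₁ * Uᵀ + X₂ * Hᵀ = (Y₁ * Uᵀ + Y₂ * Hᵀ)ᵀ :=
  calc X₁ * Uᵀ + X₂ * Hᵀ = X₁ * (Y₁ * C + Y₂ * Wᵀ)ᵀ + X₂ * (Y₁ * W + Y₂ * G)ᵀ := by
        rw [hY₁, hY₂]
  _ = (X₁ * C + X₂ * Wᵀ) * Y₁ᵀ + (X₁ * W + X₂ * G) * Y₂ᵀ := by
        simp only [transpose_add, transpose_mul, transpose_transpose, hC, hG, Matrix.mul_add,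
          Matrix.add_mul, Matrix.mul_assoc]
        abel
  _ = (Y₁ * Uᵀ + Y₂ * Hᵀ)ᵀ := by
        rw [hX₁, hX₂, transpose_add, transpose_mul, transpose_mul, transpose_transpose,
          transpose_transpose]

theorem exists_solution_of_schurComplement {R κ μ ν : Type*} [CommRing R] [Fintype κ]
    [Fintype μ] {C Cp : Matrix κ κ R} {G Gtp : Matrix μ μ R} {W : Matrix κ μ R}
    {U : Matrix ν κ R} {H : Matrix ν μ R} (hCp : Cpᵀ = Cp)
    (hU : U * Cp * C = U) (hW : Wᵀ * Cp * C = Wᵀ)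
    (hH : (H - U * Cp * W) * Gtp * (G - Wᵀ * Cp * W) = H - U * Cp * W) :
    ∃ (Y₁ : Matrix ν κ R) (Y₂ : Matrix ν μ R), Y₁ * C + Y₂ * Wᵀ = U ∧ Y₁ * W + Y₂ * G = H ∧
      Y₁ * Uᵀ + Y₂ * Hᵀ = U * Cp * Uᵀ + (H - U * Cp * W) * Gtp * (H - U * Cp * W)ᵀ := by
  set Y₂ := (H - U * Cp * W) * Gtp
  refine ⟨(U - Y₂ * Wᵀ) * Cp, Y₂, ?_, ?_, ?_⟩
  · rw [Matrix.sub_mul, Matrix.sub_mul, hU, Matrix.mul_assoc Y₂, Matrix.mul_assoc Y₂, hW,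
      sub_add_cancel]
  · calc (U - Y₂ * Wᵀ) * Cp * W + Y₂ * G = U * Cp * W + Y₂ * (G - Wᵀ * Cp * W) := by
          simp only [Matrix.sub_mul, Matrix.mul_sub, Matrix.mul_assoc]
          abel
    _ = H := by rw [hH, add_sub_cancel]
  · simp only [transpose_sub, transpose_mul, hCp, Matrix.sub_mul, Matrix.mul_sub,
      Matrix.mul_assoc, Y₂]
    abel

theorem gram_residual_eq_schurComplement {ρ κ μ : Type*} [Fintype ρ] [Fintype κ] [DecidableEq κ]
    (K₁ : Matrix ρ κ ℝ) (K₂ : Matrix ρ μ ℝ) {Cp : Matrix κ κ ℝ} (hCp : IsMP (K₁ᵀ * K₁) Cp) :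
    (K₂ - K₁ * Cp * (K₁ᵀ * K₂))ᵀ * (K₂ - K₁ * Cp * (K₁ᵀ * K₂)) =
      K₂ᵀ * K₂ - (K₁ᵀ * K₂)ᵀ * Cp * (K₁ᵀ * K₂) := by
  have hCpt : Cpᵀ = Cp := (hCp.isSymm (by simp [IsSymm, transpose_mul])).eq
  have hK₁ : (K₂ - K₁ * Cp * (K₁ᵀ * K₂))ᵀ * K₁ = 0 := by
    rw [transpose_sub, Matrix.sub_mul, sub_eq_zero]
    have hK₁K₁ := mul_mul_transpose_mul_self_cancel hCp.1
    rw [Matrix.mul_assoc] at hK₁K₁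
    simp only [transpose_mul, transpose_transpose, hCpt, Matrix.mul_assoc, hK₁K₁]
  rw [Matrix.mul_sub (K₂ - _)ᵀ, ← Matrix.mul_assoc _ (K₁ * Cp), ← Matrix.mul_assoc _ K₁, hK₁]
  simp only [transpose_sub, transpose_mul, transpose_transpose, hCpt, Matrix.zero_mul,
    Matrix.sub_mul, sub_zero, Matrix.mul_assoc]

section Gram

variable {ρ κ μ ν : Type*} [Fintype ρ] [Fintype κ] [Fintype μ] [DecidableEq κ] [DecidableEq μ]
  {C Cp Cp' : Matrix κ κ ℝ} {G Gp Gtp : Matrix μ μ ℝ} {W : Matrix κ μ ℝ}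
  {U : Matrix ν κ ℝ} {H : Matrix ν μ ℝ}

theorem exists_solution_of_gram (K₁ : Matrix ρ κ ℝ) (K₂ : Matrix ρ μ ℝ) (K₀ : Matrix ρ ν ℝ)
    (hC : K₁ᵀ * K₁ = C) (hW : K₁ᵀ * K₂ = W) (hG : K₂ᵀ * K₂ = G)
    (hU : K₀ᵀ * K₁ = U) (hH : K₀ᵀ * K₂ = H)
    (hCp : IsMP C Cp) (hGtp : IsMP (G - Wᵀ * Cp * W) Gtp) :
    ∃ (Y₁ : Matrix ν κ ℝ) (Y₂ : Matrix ν μ ℝ), Y₁ * C + Y₂ * Wᵀ = U ∧ Y₁ * W + Y₂ * G = H ∧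
      Y₁ * Uᵀ + Y₂ * Hᵀ = U * Cp * Uᵀ + (H - U * Cp * W) * Gtp * (H - U * Cp * W)ᵀ := by
  subst hC hW hG hU hH
  have hCpt : Cpᵀ = Cp := (hCp.isSymm (by simp [IsSymm, transpose_mul])).eq
  have hK₁ := mul_mul_transpose_mul_self_cancel hCp.1
  set R := K₂ - K₁ * Cp * (K₁ᵀ * K₂)
  have hR : R * Gtp * (Rᵀ * R) = R :=
    mul_mul_transpose_mul_self_cancel (gram_residual_eq_schurComplement K₁ K₂ hCp ▸ hGtp).1
  refine exists_solution_of_schurComplement hCpt ?_ ?_ ?_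
  · rw [Matrix.mul_assoc K₀ᵀ, Matrix.mul_assoc K₀ᵀ, hK₁]
  · rw [transpose_mul, transpose_transpose, Matrix.mul_assoc K₂ᵀ, Matrix.mul_assoc K₂ᵀ, hK₁]
  · have hK₀R : K₀ᵀ * K₂ - K₀ᵀ * K₁ * Cp * (K₁ᵀ * K₂) = K₀ᵀ * R := by
      simp only [R, Matrix.mul_sub, Matrix.mul_assoc]
    rw [← gram_residual_eq_schurComplement K₁ K₂ hCp, hK₀R, Matrix.mul_assoc K₀ᵀ,
      Matrix.mul_assoc K₀ᵀ]
    exact congrArg (K₀ᵀ * ·) hR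

theorem gram_schurComplement_quadratic_comm (K₁ : Matrix ρ κ ℝ) (K₂ : Matrix ρ μ ℝ)
    (K₀ : Matrix ρ ν ℝ) (hC : K₁ᵀ * K₁ = C) (hW : K₁ᵀ * K₂ = W) (hG : K₂ᵀ * K₂ = G)
    (hU : K₀ᵀ * K₁ = U) (hH : K₀ᵀ * K₂ = H) (hCp : IsMP C Cp) (hGp : IsMP G Gp)
    (hGtp : IsMP (G - Wᵀ * Cp * W) Gtp) (hCp' : IsMP (C - W * Gp * Wᵀ) Cp') :
    U * Cp * Uᵀ + (H - U * Cp * W) * Gtp * (H - U * Cp * W)ᵀ =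
      H * Gp * Hᵀ + (U - H * Gp * Wᵀ) * Cp' * (U - H * Gp * Wᵀ)ᵀ := by
  have hCsymm : Cᵀ = C := by rw [← hC, transpose_mul, transpose_transpose]
  have hGsymm : Gᵀ = G := by rw [← hG, transpose_mul, transpose_transpose]
  have hCpt : Cpᵀ = Cp := (hCp.isSymm hCsymm).eq
  have hGtpt : Gtpᵀ = Gtp := by
    refine (hGtp.isSymm ?_).eq
    simp only [IsSymm, transpose_sub, transpose_mul, transpose_transpose, hGsymm, hCpt,
      Matrix.mul_assoc]
  obtain ⟨Y₁, Y₂, hY₁, hY₂, hYval⟩ := exists_solution_of_gram K₁ K₂ K₀ hC hW hG hU hH hCp hGtp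
  obtain ⟨X₂, X₁, hX₂, hX₁, hXval⟩ := exists_solution_of_gram K₂ K₁ K₀ hG
    (by rw [← hW, transpose_mul, transpose_transpose] : K₂ᵀ * K₁ = Wᵀ) hC hH hU hGp
    (by rwa [transpose_transpose])
  rw [transpose_transpose] at hX₂
  calc U * Cp * Uᵀ + (H - U * Cp * W) * Gtp * (H - U * Cp * W)ᵀ
      = (Y₁ * Uᵀ + Y₂ * Hᵀ)ᵀ := by
        rw [hYval, transpose_add, transpose_mul, transpose_mul, transpose_transpose, hCpt,
          transpose_mul, transpose_mul, transpose_transpose, hGtpt, Matrix.mul_assoc,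
          Matrix.mul_assoc (H - U * Cp * W)]
    _ = X₁ * Uᵀ + X₂ * Hᵀ :=
        (solution_pairing_symm hCsymm hGsymm (by rwa [add_comm]) (by rwa [add_comm]) hY₁ hY₂).symm
    _ = H * Gp * Hᵀ + (U - H * Gp * Wᵀ) * Cp' * (U - H * Gp * Wᵀ)ᵀ := by
        rw [add_comm, hXval]

end Gram

section Factorization

variable {ι κ : Type*} [Fintype ι] [Fintype κ] [DecidableEq ι] [DecidableEq κ]

open scoped MatrixOrder in
theorem Matrix.PosSemidef.exists_eq_transpose_mul_self {M : Matrix ι ι ℝ} (h : M.PosSemidef) :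
    ∃ R : Matrix ι ι ℝ, M = Rᵀ * R := by
  obtain ⟨R, hR⟩ := CStarAlgebra.nonneg_iff_eq_star_mul_self.mp h.nonneg
  exact ⟨R, by rw [hR, star_eq_conjTranspose, conjTranspose_eq_transpose_of_trivial]⟩

theorem Matrix.PosSemidef.exists_fromBlocks_gram {A : Matrix ι ι ℝ} {B : Matrix ι κ ℝ}
    {D : Matrix κ κ ℝ} (h : (fromBlocks A B Bᵀ D).PosSemidef) :
    ∃ (X : Matrix (ι ⊕ κ) ι ℝ) (Y : Matrix (ι ⊕ κ) κ ℝ),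
      A = Xᵀ * X ∧ B = Xᵀ * Y ∧ D = Yᵀ * Y := by
  obtain ⟨R, hR⟩ := h.exists_eq_transpose_mul_self
  rw [← fromCols_toCols R, transpose_fromCols, fromRows_mul_fromCols] at hR
  obtain ⟨hA, hB, -, hD⟩ := fromBlocks_inj.mp hR
  exact ⟨R.toCols₁, R.toCols₂, hA, hB, hD⟩

theorem exists_gram_of_downdate {P : Matrix ι ι ℝ} {V : Matrix ι κ ℝ} {C Cp : Matrix κ κ ℝ}
    (hC : C.PosSemidef) (hV : ∃ Y : Matrix κ ι ℝ, Vᵀ = C * Y) (hCp : IsMP C Cp)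
    (hPt : (P - V * Cp * Vᵀ).PosSemidef) :
    ∃ (E : Matrix (κ ⊕ ι) κ ℝ) (L : Matrix (κ ⊕ ι) ι ℝ),
      C = Eᵀ * E ∧ Vᵀ = Eᵀ * L ∧ P = Lᵀ * L := by
  obtain ⟨Z, hZ⟩ := hC.exists_eq_transpose_mul_self
  obtain ⟨S, hS⟩ := hPt.exists_eq_transpose_mul_self
  obtain ⟨Y, hY⟩ := hV
  have hCpt : Cpᵀ = Cp := (hCp.isSymm (by rw [IsSymm, hZ, transpose_mul, transpose_transpose])).eq
  have hCCpV : C * Cp * Vᵀ = Vᵀ := by rw [hY, ← Matrix.mul_assoc, hCp.1]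
  refine ⟨fromRows Z 0, fromRows (Z * Cp * Vᵀ) S, ?_, ?_, ?_⟩
  · rw [transpose_fromRows, fromCols_mul_fromRows, transpose_zero, Matrix.zero_mul, add_zero, hZ]
  · rw [transpose_fromRows, fromCols_mul_fromRows, transpose_zero, Matrix.zero_mul, add_zero,
      ← Matrix.mul_assoc, ← Matrix.mul_assoc, ← hZ, hCCpV]
  · rw [transpose_fromRows, fromCols_mul_fromRows, ← hS]
    have hVCpV : (Z * Cp * Vᵀ)ᵀ * (Z * Cp * Vᵀ) = V * Cp * Vᵀ := by
      simp only [transpose_mul, transpose_transpose, hCpt, Matrix.mul_assoc]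
      rw [← Matrix.mul_assoc Zᵀ, ← hZ, ← Matrix.mul_assoc C, hCCpV]
    rw [hVCpV, add_sub_cancel]

end Factorization

theorem riccati_downdate_propagation_general {n m k : ℕ}
    (A : Matrix (Fin n) (Fin n) ℝ) (B : Matrix (Fin n) (Fin m) ℝ)
    (P : Matrix (Fin n) (Fin n) ℝ)
    (Qx : Matrix (Fin n) (Fin n) ℝ) (Qxw : Matrix (Fin n) (Fin m) ℝ)
    (Qw : Matrix (Fin m) (Fin m) ℝ)
    (V : Matrix (Fin n) (Fin k) ℝ) (C Cp : Matrix (Fin k) (Fin k) ℝ)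
    (Gp Gtp : Matrix (Fin m) (Fin m) ℝ) (Cp' : Matrix (Fin k) (Fin k) ℝ)
    (hQ : (Matrix.fromBlocks Qx Qxw Qxwᵀ Qw).PosSemidef)
    (hC : C.PosSemidef)
    (hV : ∃ Y : Matrix (Fin k) (Fin n) ℝ, Vᵀ = C * Y)
    (hPt : (P - V * Cp * Vᵀ).PosSemidef)
    (hCp : IsMP C Cp)
    (hGp : IsMP (Qw + Bᵀ * P * B) Gp)
    (hGtp : IsMP ((Qw + Bᵀ * P * B) - Bᵀ * V * Cp * Vᵀ * B) Gtp)
    (hCp' : IsMP (C - Vᵀ * B * Gp * Bᵀ * V) Cp') :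
    ((Qx + Aᵀ * P * A) - Aᵀ * V * Cp * Vᵀ * A) -
      ((Qxw + Aᵀ * P * B) - Aᵀ * V * Cp * Vᵀ * B) * Gtp *
        ((Qxw + Aᵀ * P * B) - Aᵀ * V * Cp * Vᵀ * B)ᵀ =
    ((Qx + Aᵀ * P * A) - (Qxw + Aᵀ * P * B) * Gp * (Qxw + Aᵀ * P * B)ᵀ) -
      ((Aᵀ - (Qxw + Aᵀ * P * B) * Gp * Bᵀ) * V) * Cp' *
        ((Aᵀ - (Qxw + Aᵀ * P * B) * Gp * Bᵀ) * V)ᵀ := by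
  obtain ⟨X, Y, -, hQxw, hQw⟩ := hQ.exists_fromBlocks_gram
  obtain ⟨E, L, hCE, hVE, hPL⟩ := exists_gram_of_downdate hC hV hCp hPt
  have hEV : Lᵀ * E = V := by rw [← transpose_transpose V, hVE, transpose_mul, transpose_transpose]
  have key := gram_schurComplement_quadratic_comm
    (fromRows (0 : Matrix (Fin n ⊕ Fin m) (Fin k) ℝ) E) (fromRows Y (L * B)) (fromRows X (L * A))
    (C := C) (W := Vᵀ * B) (G := Qw + Bᵀ * P * B) (U := Aᵀ * V) (H := Qxw + Aᵀ * P * B)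
    (by simp [transpose_fromRows, fromCols_mul_fromRows, hCE])
    (by simp [transpose_fromRows, fromCols_mul_fromRows, hVE, Matrix.mul_assoc])
    (by simp [transpose_fromRows, fromCols_mul_fromRows, hQw, hPL, Matrix.mul_assoc])
    (by simp [transpose_fromRows, fromCols_mul_fromRows, hEV, Matrix.mul_assoc])
    (by simp [transpose_fromRows, fromCols_mul_fromRows, hQxw, hPL, Matrix.mul_assoc])
    hCp hGp (by simpa only [transpose_mul, transpose_transpose, Matrix.mul_assoc] using hGtp)
    (by simpa only [transpose_mul, transpose_transpose, Matrix.mul_assoc] using hCp')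
  rw [sub_sub, sub_sub]
  congr 1
  simpa only [transpose_mul, transpose_transpose, Matrix.sub_mul, Matrix.mul_assoc] using key

theorem riccati_downdate_propagation {n m k : ℕ}
    (A : Matrix (Fin n) (Fin n) ℝ) (B : Matrix (Fin n) (Fin m) ℝ)
    (P : Matrix (Fin n) (Fin n) ℝ)
    (Qx : Matrix (Fin n) (Fin n) ℝ) (Qxw : Matrix (Fin n) (Fin m) ℝ)
    (Qw : Matrix (Fin m) (Fin m) ℝ)
    (V : Matrix (Fin n) (Fin k) ℝ) (C Cp : Matrix (Fin k) (Fin k) ℝ)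
    (Gp Gtp : Matrix (Fin m) (Fin m) ℝ) (Cp' : Matrix (Fin k) (Fin k) ℝ)
    (hQ : (Matrix.fromBlocks Qx Qxw Qxwᵀ Qw).PosSemidef)
    (hP : P.PosSemidef) (hC : C.PosSemidef)
    (hV : ∃ Y : Matrix (Fin k) (Fin n) ℝ, Vᵀ = C * Y)
    (hPt : (P - V * Cp * Vᵀ).PosSemidef)
    (hCp : IsMP C Cp)
    (hGp : IsMP (Qw + Bᵀ * P * B) Gp)
    (hGtp : IsMP ((Qw + Bᵀ * P * B) - Bᵀ * V * Cp * Vᵀ * B) Gtp)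
    (hCp' : IsMP (C - Vᵀ * B * Gp * Bᵀ * V) Cp') :
    ((Qx + Aᵀ * P * A) - Aᵀ * V * Cp * Vᵀ * A) -
      ((Qxw + Aᵀ * P * B) - Aᵀ * V * Cp * Vᵀ * B) * Gtp *
        ((Qxw + Aᵀ * P * B) - Aᵀ * V * Cp * Vᵀ * B)ᵀ =
    ((Qx + Aᵀ * P * A) - (Qxw + Aᵀ * P * B) * Gp * (Qxw + Aᵀ * P * B)ᵀ) -
      ((Aᵀ - (Qxw + Aᵀ * P * B) * Gp * Bᵀ) * V) * Cp' *
        ((Aᵀ - (Qxw + Aᵀ * P * B) * Gp * Bᵀ) * V)ᵀ :=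
  riccati_downdate_propagation_general A B P Qx Qxw Qw V C Cp Gp Gtp Cp' hQ hC hV hPt hCp hGp hGtp
    hCp'
end

section
/- Under the assumptions of the Riccati downdate propagation, C' := C - VᵀB G† BᵀV is positive semidefinite and range(V'ᵀ) ⊆ range(C') where V' := (Aᵀ - H G† Bᵀ)V. -/
/-!
Since `range Vᵀ ⊆ range C` and `P - V C† Vᵀ ⪰ 0`, the block matrix `K = [[C, Vᵀ], [V, P]]` is
positive semidefinite. Substituting the dynamics `x⁺ = A x + B w` into `K` and adding the stage
cost `Q` gives a positive semidefinite matrix `M` in the variables `(λ, x, w)` whose `w`-block is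
`G`. The generalized Schur complement of `G` in `M` is again positive semidefinite, and its
`λλ`- and `xλ`-blocks are exactly `C'` and `V'`. Finally, in any positive semidefinite block
matrix `[[A, B], [C, D]]` one has `range Cᴴ ⊆ range A`: if `A x = 0`, the quadratic form vanishes
at `(x, 0)`, so `(x, 0)` lies in the kernel and `C x = 0`.
-/

open Matrix

open scoped ComplexOrder

theorem LinearMap.exists_comp_eq_of_ker_le {K V W U : Type*} [Field K]
    [AddCommGroup V] [Module K V] [AddCommGroup W] [Module K W] [AddCommGroup U] [Module K U]
    (f : V →ₗ[K] W) (g : V →ₗ[K] U) (h : LinearMap.ker f ≤ LinearMap.ker g) :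
    ∃ e : W →ₗ[K] U, e ∘ₗ f = g := by
  obtain ⟨e, he⟩ :=
    ((LinearMap.ker f).liftQ g h ∘ₗ f.quotKerEquivRange.symm.toLinearMap).exists_extend
  refine ⟨e, LinearMap.ext fun v => ?_⟩
  simpa [LinearMap.quotKerEquivRange_symm_apply_image] using
    LinearMap.congr_fun he ⟨f v, LinearMap.mem_range_self f v⟩

namespace Matrix

theorem fromRows_add_fromRows {R m₁ m₂ n : Type*} [Add R] (A₁ B₁ : Matrix m₁ n R)
    (A₂ B₂ : Matrix m₂ n R) : fromRows A₁ A₂ + fromRows B₁ B₂ = fromRows (A₁ + B₁) (A₂ + B₂) := by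
  ext (i | i) j <;> rfl

theorem fromCols_add_fromCols {R m n₁ n₂ : Type*} [Add R] (A₁ B₁ : Matrix m n₁ R)
    (A₂ B₂ : Matrix m n₂ R) : fromCols A₁ A₂ + fromCols B₁ B₂ = fromCols (A₁ + B₁) (A₂ + B₂) := by
  ext i (j | j) <;> rfl

theorem fromCols_zero_fromRows_zero {R l m n p : Type*} [Zero R] (A : Matrix m n R) :
    fromCols (0 : Matrix (l ⊕ m) p R) (fromRows 0 A) = fromBlocks 0 0 0 A := by
  ext (i | i) (j | j) <;> rfl

theorem fromBlocks_sub_fromRows_mul_mul_fromCols {R l m p : Type*} [Ring R] [Fintype p]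
    (A₁₁ : Matrix l l R) (A₁₂ : Matrix l m R) (A₂₁ : Matrix m l R) (A₂₂ : Matrix m m R)
    (B₁ : Matrix l p R) (B₂ : Matrix m p R) (D : Matrix p p R) (C₁ : Matrix p l R)
    (C₂ : Matrix p m R) :
    fromBlocks A₁₁ A₁₂ A₂₁ A₂₂ - fromRows B₁ B₂ * D * fromCols C₁ C₂ =
      fromBlocks (A₁₁ - B₁ * D * C₁) (A₁₂ - B₁ * D * C₂) (A₂₁ - B₂ * D * C₁)
        (A₂₂ - B₂ * D * C₂) := by
  rw [fromRows_mul, fromRows_mul_fromCols, sub_eq_add_neg, fromBlocks_neg, fromBlocks_add]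
  simp only [← sub_eq_add_neg]

theorem exists_eq_mul_of_mulVec_eq_zero {K l m n : Type*} [Field K] [Fintype m] [DecidableEq m]
    [Fintype n] [DecidableEq n] (S : Matrix m n K) (T : Matrix l n K)
    (h : ∀ v, S *ᵥ v = 0 → T *ᵥ v = 0) :
    ∃ X : Matrix l m K, T = X * S := by
  obtain ⟨e, he⟩ := LinearMap.exists_comp_eq_of_ker_le (toLin' S) (toLin' T) fun v => h v
  exact ⟨LinearMap.toMatrix' e, toLin'.injective <| by rw [toLin'_mul, toLin'_toMatrix', he]⟩

namespace PosSemidef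

variable {𝕜 m n : Type*} [RCLike 𝕜] [Fintype m] [Fintype n] [DecidableEq m]

theorem exists_conjTranspose_eq_mul_of_fromBlocks {A : Matrix m m 𝕜} {B : Matrix m n 𝕜}
    {C : Matrix n m 𝕜} {D : Matrix n n 𝕜} (h : (fromBlocks A B C D).PosSemidef) :
    ∃ Y : Matrix m n 𝕜, Cᴴ = A * Y := by
  have hker : ∀ x, A *ᵥ x = 0 → C *ᵥ x = 0 := fun x hx => by
    have hM : fromBlocks A B C D *ᵥ Sum.elim x 0 = 0 :=
      (h.dotProduct_mulVec_zero_iff _).1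
        (by simp [fromBlocks_mulVec, hx, dotProduct, Fintype.sum_sum_type])
    ext i
    simpa [fromBlocks_mulVec] using congrFun hM (Sum.inr i)
  obtain ⟨X, rfl⟩ := exists_eq_mul_of_mulVec_eq_zero A C hker
  exact ⟨Xᴴ, by rw [conjTranspose_mul, (isHermitian_fromBlocks_iff.1 h.isHermitian).1.eq]⟩

theorem fromBlocks_fromBlocks_of_fromBlocks {l p : Type*} [Fintype l] [Fintype p]
    [DecidableEq l] [DecidableEq p] {C : Matrix l l 𝕜} {U : Matrix l n 𝕜} {V : Matrix n l 𝕜}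
    {P : Matrix n n 𝕜} {Qx : Matrix p p 𝕜} {Qxw : Matrix p m 𝕜} {Qwx : Matrix m p 𝕜}
    {Qw : Matrix m m 𝕜} (hK : (fromBlocks C U V P).PosSemidef)
    (hQ : (fromBlocks Qx Qxw Qwx Qw).PosSemidef) (A : Matrix n p 𝕜) (B : Matrix n m 𝕜) :
    (fromBlocks (fromBlocks C (U * A) (Aᴴ * V) (Qx + Aᴴ * P * A))
      (fromRows (U * B) (Qxw + Aᴴ * P * B)) (fromCols (Bᴴ * V) (Qwx + Bᴴ * P * A))
      (Qw + Bᴴ * P * B)).PosSemidef := by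
  -- `T₁ (λ, x, w) = (λ, A x + B w)` and `T₂ (λ, x, w) = (x, w)`.
  set T₁ : Matrix (l ⊕ n) ((l ⊕ p) ⊕ m) 𝕜 := fromCols (fromBlocks 1 0 0 A) (fromRows 0 B)
  set T₂ : Matrix (p ⊕ m) ((l ⊕ p) ⊕ m) 𝕜 := fromBlocks (fromCols 0 1) 0 0 1
  have hT₁ : T₁ᴴ * fromBlocks C U V P * T₁ =
      fromBlocks (fromBlocks C (U * A) (Aᴴ * V) (Aᴴ * P * A)) (fromRows (U * B) (Aᴴ * P * B))
        (fromCols (Bᴴ * V) (Bᴴ * P * A)) (Bᴴ * P * B) := by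
    simp [T₁, fromBlocks_conjTranspose, conjTranspose_fromRows_eq_fromCols_conjTranspose,
      conjTranspose_fromCols_eq_fromRows_conjTranspose, fromBlocks_multiply,
      fromBlocks_mul_fromRows, fromCols_mul_fromBlocks, fromCols_mul_fromRows, Matrix.mul_assoc]
  have hT₂ : T₂ᴴ * fromBlocks Qx Qxw Qwx Qw * T₂ =
      fromBlocks (fromBlocks 0 0 0 Qx) (fromRows 0 Qxw) (fromCols 0 Qwx) Qw := by
    simp [T₂, fromBlocks_conjTranspose, conjTranspose_fromCols_eq_fromRows_conjTranspose,
      fromBlocks_multiply, fromCols_zero_fromRows_zero]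
  have h := (hQ.conjTranspose_mul_mul_same T₂).add (hK.conjTranspose_mul_mul_same T₁)
  rw [hT₁, hT₂, fromBlocks_add, fromBlocks_add, fromRows_add_fromRows, fromCols_add_fromCols] at h
  simpa using h

variable [DecidableEq n]

theorem fromBlocks_of_sub_mul_mul {A Ap : Matrix m m 𝕜} {B : Matrix m n 𝕜} {D : Matrix n n 𝕜}
    {Y : Matrix m n 𝕜} (hA : A.PosSemidef) (hAp : A * Ap * A = A) (hB : B = A * Y)
    (hS : (D - Bᴴ * Ap * B).PosSemidef) : (fromBlocks A B Bᴴ D).PosSemidef := by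
  have hBY : Bᴴ * Ap * B = Yᴴ * A * Y :=
    calc Bᴴ * Ap * B = Yᴴ * (A * Ap * A) * Y := by
          rw [hB, conjTranspose_mul, hA.isHermitian.eq]; simp only [Matrix.mul_assoc]
      _ = Yᴴ * A * Y := by rw [hAp]
  set L : Matrix m (m ⊕ n) 𝕜 := fromCols 1 Y
  set R : Matrix n (m ⊕ n) 𝕜 := fromCols 0 1
  have hL : Lᴴ * A * L = fromBlocks A B Bᴴ (Bᴴ * Ap * B) := by
    rw [hBY, hB, conjTranspose_mul, hA.isHermitian.eq,
      conjTranspose_fromCols_eq_fromRows_conjTranspose, fromRows_mul, fromRows_mul_fromCols]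
    simp [Matrix.mul_assoc]
  have hR : Rᴴ * (D - Bᴴ * Ap * B) * R = fromBlocks 0 0 0 (D - Bᴴ * Ap * B) := by
    rw [conjTranspose_fromCols_eq_fromRows_conjTranspose, fromRows_mul, fromRows_mul_fromCols]
    simp
  have h := (hA.conjTranspose_mul_mul_same L).add (hS.conjTranspose_mul_mul_same R)
  rw [hL, hR, fromBlocks_add] at h
  simpa using h

theorem sub_mul_mul_of_fromBlocks {A : Matrix m m 𝕜} {B : Matrix m n 𝕜} {C : Matrix n m 𝕜}
    {D Dp : Matrix n n 𝕜} (h : (fromBlocks A B C D).PosSemidef) (hD : D * Dp * D = D) :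
    (A - B * Dp * C).PosSemidef := by
  obtain ⟨Z, hBZ⟩ := (fromBlocks_submatrix_sum_swap_sum_swap A B C D ▸
    h.submatrix Sum.swap).exists_conjTranspose_eq_mul_of_fromBlocks
  have hDC : D * (Dp * C) = C := by
    rw [← (isHermitian_fromBlocks_iff.1 h.isHermitian).2.1, hBZ, ← Matrix.mul_assoc,
      ← Matrix.mul_assoc, hD]
  -- `D D† C = C` lets the congruence by `[1; -D† C]` clear the off-diagonal blocks.
  have hX : fromBlocks A B C D * fromRows (1 : Matrix m m 𝕜) (-(Dp * C)) =
      fromRows (A - B * Dp * C) 0 := by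
    rw [fromBlocks_mul_fromRows]
    simp [hDC, sub_eq_add_neg, Matrix.mul_assoc]
  have := h.conjTranspose_mul_mul_same (fromRows (1 : Matrix m m 𝕜) (-(Dp * C)))
  rwa [Matrix.mul_assoc, hX, conjTranspose_fromRows_eq_fromCols_conjTranspose,
    fromCols_mul_fromRows, conjTranspose_one, Matrix.one_mul, Matrix.mul_zero, add_zero] at this

end PosSemidef

end Matrix

theorem riccati_downdate_range_condition_general {n m k : ℕ}
    (A : Matrix (Fin n) (Fin n) ℝ) (B : Matrix (Fin n) (Fin m) ℝ)
    (P : Matrix (Fin n) (Fin n) ℝ)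
    (Qx : Matrix (Fin n) (Fin n) ℝ) (Qxw : Matrix (Fin n) (Fin m) ℝ)
    (Qw : Matrix (Fin m) (Fin m) ℝ)
    (V : Matrix (Fin n) (Fin k) ℝ) (C Cp : Matrix (Fin k) (Fin k) ℝ)
    (Gp : Matrix (Fin m) (Fin m) ℝ)
    (hQ : (Matrix.fromBlocks Qx Qxw Qxwᵀ Qw).PosSemidef)
    (hC : C.PosSemidef)
    (hV : ∃ Y : Matrix (Fin k) (Fin n) ℝ, Vᵀ = C * Y)
    (hPt : (P - V * Cp * Vᵀ).PosSemidef)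
    (hCp : IsMP C Cp)
    (hGp : IsMP (Qw + Bᵀ * P * B) Gp) :
    (C - Vᵀ * B * Gp * Bᵀ * V).PosSemidef ∧
    ∃ Y : Matrix (Fin k) (Fin n) ℝ,
      ((Aᵀ - (Qxw + Aᵀ * P * B) * Gp * Bᵀ) * V)ᵀ =
        (C - Vᵀ * B * Gp * Bᵀ * V) * Y := by
  obtain ⟨Y, hY⟩ := hV
  have hK : (fromBlocks C Vᵀ V P).PosSemidef := by
    simpa using hC.fromBlocks_of_sub_mul_mul hCp.1 hY (by simpa using hPt)
  have hM := hK.fromBlocks_fromBlocks_of_fromBlocks hQ A B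
  simp only [conjTranspose_eq_transpose_of_trivial] at hM
  have hS := hM.sub_mul_mul_of_fromBlocks hGp.1
  rw [fromBlocks_sub_fromRows_mul_mul_fromCols] at hS
  have hC' : (toBlocks₁₁ _).PosSemidef := hS.submatrix Sum.inl
  rw [toBlocks_fromBlocks₁₁] at hC'
  obtain ⟨Z, hZ⟩ := hS.exists_conjTranspose_eq_mul_of_fromBlocks
  exact ⟨by simpa only [Matrix.mul_assoc] using hC',
    Z, by simpa [Matrix.sub_mul, Matrix.mul_assoc] using hZ⟩

theorem riccati_downdate_range_condition {n m k : ℕ}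
    (A : Matrix (Fin n) (Fin n) ℝ) (B : Matrix (Fin n) (Fin m) ℝ)
    (P : Matrix (Fin n) (Fin n) ℝ)
    (Qx : Matrix (Fin n) (Fin n) ℝ) (Qxw : Matrix (Fin n) (Fin m) ℝ)
    (Qw : Matrix (Fin m) (Fin m) ℝ)
    (V : Matrix (Fin n) (Fin k) ℝ) (C Cp : Matrix (Fin k) (Fin k) ℝ)
    (Gp : Matrix (Fin m) (Fin m) ℝ)
    (hQ : (Matrix.fromBlocks Qx Qxw Qxwᵀ Qw).PosSemidef)
    (hP : P.PosSemidef) (hC : C.PosSemidef)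
    (hV : ∃ Y : Matrix (Fin k) (Fin n) ℝ, Vᵀ = C * Y)
    (hPt : (P - V * Cp * Vᵀ).PosSemidef)
    (hCp : IsMP C Cp)
    (hGp : IsMP (Qw + Bᵀ * P * B) Gp) :
    (C - Vᵀ * B * Gp * Bᵀ * V).PosSemidef ∧
    ∃ Y : Matrix (Fin k) (Fin n) ℝ,
      ((Aᵀ - (Qxw + Aᵀ * P * B) * Gp * Bᵀ) * V)ᵀ =
        (C - Vᵀ * B * Gp * Bᵀ * V) * Y :=
  riccati_downdate_range_condition_general A B P Qx Qxw Qw V C Cp Gp hQ hC hV hPt hCp hGp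
end

section
/- If a rank-at-most-k downdate P̃_{t+1} = P_{t+1} - V C† Vᵀ ⪰ 0 (C ∈ 𝕊₊^k, range(Vᵀ) ⊆ range(C)) is applied at one step of a Riccati recursion with PSD stage-cost matrices, then for every earlier time index t the resulting modified Riccati matrix satisfies P̃_t = P_t - V_t C_t† V_tᵀ ⪰ 0 for some C_t ∈ 𝕊₊^k and V_t ∈ ℝ^{n×k} with range(V_tᵀ) ⊆ range(C_t); i.e., a rank-≤k downdate propagates backwards as a rank-≤k downdate. -/
/-!
Write the stage cost and the bordered matrix `[[P, V], [Vᵀ, C]]` (positive semidefinite since its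
generalized Schur complement `P̃ = P - V C† Vᵀ` is) as Gram matrices, and stack the factors into
`Uₙ, Uₘ, Uₖ` whose Gram blocks are `Qx + AᵀPA, Qxw + AᵀPB, Qw + BᵀPB` and `AᵀV, BᵀV, C`.
A generalized Schur complement of a Gram matrix is `Uᵀ (I - Π) U` with `Π` an orthogonal
projection. So one Riccati step applied to `P̃` is `Uₙᵀ (I - Π) Uₙ`, where `Π` projects onto
`col Uₖ + col Uₘ` and is assembled by projecting first onto `col Uₖ` and then onto the residual of
`Uₘ`. Assembling the same projection in the other order, first `col Uₘ` and then the residual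
`Uₖ'` of `Uₖ`, exhibits it as the Riccati step applied to `P` minus `Vₜ Cₜ† Vₜᵀ`, with
`Cₜ = Uₖ'ᵀ Uₖ'` and `Vₜ = Uₙᵀ Uₖ'`.
-/

open Matrix

namespace Matrix

variable {ι β γ ζ ω : Type*} [Fintype ι] [Fintype β] [Fintype γ]

theorem posSemidef_transpose_mul_self (M : Matrix ι β ℝ) : (Mᵀ * M).PosSemidef := by
  simpa only [conjTranspose_eq_transpose_of_trivial] using posSemidef_conjTranspose_mul_self M

open scoped MatrixOrder in
theorem PosSemidef.exists_eq_transpose_mul_self_s9 [DecidableEq β] {M : Matrix β β ℝ}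
    (hM : M.PosSemidef) : ∃ R : Matrix β β ℝ, M = Rᵀ * R := by
  obtain ⟨R, hR⟩ := CStarAlgebra.nonneg_iff_eq_star_mul_self.mp hM.nonneg
  exact ⟨R, by rwa [star_eq_conjTranspose, conjTranspose_eq_transpose_of_trivial] at hR⟩

theorem PosSemidef.exists_fromBlocks_eq_gram [DecidableEq β] [DecidableEq γ]
    {A : Matrix β β ℝ} {B : Matrix β γ ℝ} {D : Matrix γ γ ℝ}
    (h : (fromBlocks A B Bᵀ D).PosSemidef) :
    ∃ (R₁ : Matrix (β ⊕ γ) β ℝ) (R₂ : Matrix (β ⊕ γ) γ ℝ),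
      A = R₁ᵀ * R₁ ∧ B = R₁ᵀ * R₂ ∧ D = R₂ᵀ * R₂ := by
  obtain ⟨R, hR⟩ := h.exists_eq_transpose_mul_self_s9
  rw [← fromCols_toCols R, transpose_fromCols, fromRows_mul_fromCols] at hR
  obtain ⟨hA, hB, -, hD⟩ := fromBlocks_inj.mp hR
  exact ⟨R.toCols₁, R.toCols₂, hA, hB, hD⟩

theorem transpose_fromCols_mul_mul_fromCols (M : Matrix γ γ ℝ) (Y₁ : Matrix γ ζ ℝ)
    (Y₂ : Matrix γ ω ℝ) :
    (fromCols Y₁ Y₂)ᵀ * M * fromCols Y₁ Y₂ =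
      fromBlocks (Y₁ᵀ * M * Y₁) (Y₁ᵀ * M * Y₂) (Y₂ᵀ * M * Y₁) (Y₂ᵀ * M * Y₂) := by
  rw [transpose_fromCols, fromRows_mul, fromRows_mul_fromCols]

theorem posSemidef_fromBlocks_of_posSemidef_sub [DecidableEq β] [DecidableEq γ]
    {P : Matrix β β ℝ} {V : Matrix β γ ℝ} {C X : Matrix γ γ ℝ} {Y : Matrix γ β ℝ}
    (hC : C.PosSemidef) (hV : Vᵀ = C * Y) (hX : C * X * C = C)
    (hP : (P - V * X * Vᵀ).PosSemidef) : (fromBlocks P V Vᵀ C).PosSemidef := by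
  have hCt : Cᵀ = C := by simpa only [conjTranspose_eq_transpose_of_trivial] using hC.isHermitian.eq
  have hVY : V = Yᵀ * C := by rw [← transpose_transpose V, hV, transpose_mul, hCt]
  have hVXV : V * X * Vᵀ = Yᵀ * C * Y := by
    calc V * X * Vᵀ = Yᵀ * (C * X * C) * Y := by rw [hV, hVY]; simp only [Matrix.mul_assoc]
    _ = Yᵀ * C * Y := by rw [hX]
  have hP₀ := hP.conjTranspose_mul_mul_same (fromCols (1 : Matrix β β ℝ) (0 : Matrix β γ ℝ))
  have hC₀ := hC.conjTranspose_mul_mul_same (fromCols Y (1 : Matrix γ γ ℝ))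
  rw [conjTranspose_eq_transpose_of_trivial, transpose_fromCols_mul_mul_fromCols] at hP₀ hC₀
  convert hP₀.add hC₀ using 1
  rw [fromBlocks_add, hVXV]
  congr 1 <;> simp [hVY, ← hV]

/-- The orthogonal projection onto the column space of `N`, when `X` is a generalized inverse
of `Nᵀ * N`. -/
def gramProj (N : Matrix ι β ℝ) (X : Matrix β β ℝ) : Matrix ι ι ℝ := N * X * Nᵀ

variable {N : Matrix ι β ℝ} {X : Matrix β β ℝ}

theorem mul_mul_gram_eq_self (hX : Nᵀ * N * X * (Nᵀ * N) = Nᵀ * N) : N * X * (Nᵀ * N) = N := by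
  have hX' : Nᵀ * (N * (X * (Nᵀ * N))) = Nᵀ * N := by simpa only [Matrix.mul_assoc] using hX
  -- the difference `E = N X NᵀN - N` satisfies `EᵀE = 0`
  rw [← sub_eq_zero, ← conjTranspose_mul_self_eq_zero, conjTranspose_eq_transpose_of_trivial]
  simp only [transpose_sub, transpose_mul, transpose_transpose, Matrix.sub_mul, Matrix.mul_sub,
    Matrix.mul_assoc, hX']
  abel

theorem gramProj_mul_self (hX : Nᵀ * N * X * (Nᵀ * N) = Nᵀ * N) : gramProj N X * N = N := by
  rw [gramProj, Matrix.mul_assoc, mul_mul_gram_eq_self hX]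

theorem transpose_gramProj (hX : Nᵀ * N * X * (Nᵀ * N) = Nᵀ * N) :
    (gramProj N X)ᵀ = gramProj N X := by
  have h := mul_mul_gram_eq_self hX
  calc (gramProj N X)ᵀ = N * X * (Nᵀ * N) * Xᵀ * Nᵀ := by
        rw [h, gramProj, transpose_mul, transpose_mul, transpose_transpose, Matrix.mul_assoc]
  _ = N * X * (N * X * (Nᵀ * N))ᵀ := by
        simp only [transpose_mul, transpose_transpose, Matrix.mul_assoc]
  _ = gramProj N X := by rw [h, gramProj]

theorem gramProj_mul_gramProj (hX : Nᵀ * N * X * (Nᵀ * N) = Nᵀ * N) :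
    gramProj N X * gramProj N X = gramProj N X := by
  calc gramProj N X * gramProj N X = gramProj N X * N * X * Nᵀ := by
        simp only [gramProj, Matrix.mul_assoc]
  _ = gramProj N X := by rw [gramProj_mul_self hX, gramProj]

theorem transpose_mul_gramProj_mul (Z : Matrix ι ζ ℝ) (W : Matrix ι ω ℝ) :
    Zᵀ * gramProj N X * W = Zᵀ * N * X * (Wᵀ * N)ᵀ := by
  simp only [gramProj, transpose_mul, transpose_transpose, Matrix.mul_assoc]

theorem transpose_sub_gramProj_mul_sub (hX : Nᵀ * N * X * (Nᵀ * N) = Nᵀ * N)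
    (Z : Matrix ι ζ ℝ) (W : Matrix ι ω ℝ) :
    (Z - gramProj N X * Z)ᵀ * (W - gramProj N X * W) = Zᵀ * W - Zᵀ * N * X * (Wᵀ * N)ᵀ := by
  have hidem : gramProj N X * (gramProj N X * W) = gramProj N X * W := by
    rw [← Matrix.mul_assoc, gramProj_mul_gramProj hX]
  rw [← transpose_mul_gramProj_mul, transpose_sub, transpose_mul, transpose_gramProj hX]
  simp only [Matrix.sub_mul, Matrix.mul_sub, Matrix.mul_assoc, hidem]
  abel

theorem transpose_sub_gramProj_mul_of_gramProj_mul_eq_zero (hX : Nᵀ * N * X * (Nᵀ * N) = Nᵀ * N)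
    (Z : Matrix ι ζ ℝ) {W : Matrix ι ω ℝ} (hW : gramProj N X * W = 0) :
    (Z - gramProj N X * Z)ᵀ * W = Zᵀ * W := by
  rw [transpose_sub, Matrix.sub_mul, transpose_mul, transpose_gramProj hX, Matrix.mul_assoc, hW,
    Matrix.mul_zero, sub_zero]

theorem posSemidef_transpose_mul_self_sub (hX : Nᵀ * N * X * (Nᵀ * N) = Nᵀ * N) (Z : Matrix ι γ ℝ) :
    (Zᵀ * Z - Zᵀ * N * X * (Zᵀ * N)ᵀ).PosSemidef := by
  rw [← transpose_sub_gramProj_mul_sub hX]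
  exact posSemidef_transpose_mul_self _

theorem exists_transpose_mul_eq_gram_mul (hX : Nᵀ * N * X * (Nᵀ * N) = Nᵀ * N)
    (Z : Matrix ι ζ ℝ) : ∃ Y : Matrix β ζ ℝ, (Zᵀ * N)ᵀ = Nᵀ * N * Y :=
  ⟨Xᵀ * Nᵀ * Z, by
    conv_lhs => rw [← mul_mul_gram_eq_self hX]
    simp only [transpose_mul, transpose_transpose, Matrix.mul_assoc]⟩

section TwoBlocks

variable {N₁ : Matrix ι β ℝ} {N₂ : Matrix ι γ ℝ} {Q Q' : Matrix ι ι ℝ}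

/-- `Q` is the orthogonal projection onto the sum of the column spaces of `N₁` and `N₂`. -/
def IsProjOnto (N₁ : Matrix ι β ℝ) (N₂ : Matrix ι γ ℝ) (Q : Matrix ι ι ℝ) : Prop :=
  Qᵀ = Q ∧ Q * N₁ = N₁ ∧ Q * N₂ = N₂ ∧
    ∃ (X₁ : Matrix β ι ℝ) (X₂ : Matrix γ ι ℝ), Q = N₁ * X₁ + N₂ * X₂

theorem IsProjOnto.eq (h : IsProjOnto N₁ N₂ Q) (h' : IsProjOnto N₁ N₂ Q') : Q = Q' := by
  obtain ⟨hQ, hQ₁, hQ₂, X₁, X₂, hQX⟩ := h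
  obtain ⟨hQ', hQ'₁, hQ'₂, X₁', X₂', hQX'⟩ := h'
  have hQ'Q : Q' * Q = Q := by
    rw [hQX, Matrix.mul_add, ← Matrix.mul_assoc, ← Matrix.mul_assoc, hQ'₁, hQ'₂]
  have hQQ' : Q * Q' = Q' := by
    rw [hQX', Matrix.mul_add, ← Matrix.mul_assoc, ← Matrix.mul_assoc, hQ₁, hQ₂]
  calc Q = (Q' * Q)ᵀ := by rw [hQ'Q, hQ]
  _ = Q' := by rw [transpose_mul, hQ, hQ', hQQ']

theorem IsProjOnto.symm (h : IsProjOnto N₁ N₂ Q) : IsProjOnto N₂ N₁ Q := by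
  obtain ⟨hQ, h₁, h₂, X₁, X₂, rfl⟩ := h
  exact ⟨hQ, h₂, h₁, X₂, X₁, add_comm _ _⟩

theorem isProjOnto_gramProj_add_gramProj {X₂ : Matrix γ γ ℝ} {X₁ : Matrix β β ℝ}
    (hX₂ : N₂ᵀ * N₂ * X₂ * (N₂ᵀ * N₂) = N₂ᵀ * N₂)
    (hX₁ : (N₁ - gramProj N₂ X₂ * N₁)ᵀ * (N₁ - gramProj N₂ X₂ * N₁) * X₁ *
      ((N₁ - gramProj N₂ X₂ * N₁)ᵀ * (N₁ - gramProj N₂ X₂ * N₁)) =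
        (N₁ - gramProj N₂ X₂ * N₁)ᵀ * (N₁ - gramProj N₂ X₂ * N₁)) :
    IsProjOnto N₁ N₂ (gramProj N₂ X₂ + gramProj (N₁ - gramProj N₂ X₂ * N₁) X₁) := by
  set M := N₁ - gramProj N₂ X₂ * N₁ with hM
  have hMP : Mᵀ * gramProj N₂ X₂ = 0 := by
    rw [hM, transpose_sub, transpose_mul, transpose_gramProj hX₂, Matrix.sub_mul, Matrix.mul_assoc,
      gramProj_mul_gramProj hX₂, sub_self]
  have hPP : gramProj M X₁ * gramProj N₂ X₂ = 0 := by
    rw [gramProj, Matrix.mul_assoc, hMP, Matrix.mul_zero]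
  refine ⟨?_, ?_, ?_, X₁ * Mᵀ, X₂ * N₂ᵀ - X₂ * N₂ᵀ * N₁ * X₁ * Mᵀ, ?_⟩
  · rw [transpose_add, transpose_gramProj hX₂, transpose_gramProj hX₁]
  · calc (gramProj N₂ X₂ + gramProj M X₁) * N₁
        = gramProj N₂ X₂ * N₁ + (gramProj M X₁ * M + gramProj M X₁ * gramProj N₂ X₂ * N₁) := by
          rw [Matrix.add_mul, Matrix.mul_assoc, ← Matrix.mul_add, hM, sub_add_cancel]
    _ = N₁ := by rw [gramProj_mul_self hX₁, hPP, Matrix.zero_mul, add_zero, hM, add_sub_cancel]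
  · rw [Matrix.add_mul, gramProj_mul_self hX₂, ← gramProj_mul_self hX₂, ← Matrix.mul_assoc, hPP,
      Matrix.zero_mul, add_zero, gramProj_mul_self hX₂]
  · simp only [gramProj, hM, Matrix.mul_sub, Matrix.sub_mul, Matrix.mul_assoc]
    abel

end TwoBlocks

end Matrix

def IsDowndate {ν κ : Type*} [Fintype ν] [Fintype κ] (pinv : Matrix κ κ ℝ → Matrix κ κ ℝ)
    (P Pt : Matrix ν ν ℝ) : Prop :=
  ∃ (C : Matrix κ κ ℝ) (V : Matrix ν κ ℝ), C.PosSemidef ∧ (∃ Y : Matrix κ ν ℝ, Vᵀ = C * Y) ∧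
    Pt = P - V * pinv C * Vᵀ ∧ Pt.PosSemidef

theorem isDowndate_schur_of_gram {ι ν μ κ : Type*} [Fintype ι] [Fintype ν] [Fintype μ]
    [Fintype κ] {pinv : Matrix κ κ ℝ → Matrix κ κ ℝ} (hpinv : ∀ M, M * pinv M * M = M)
    {Un : Matrix ι ν ℝ} {Um : Matrix ι μ ℝ} {Uk : Matrix ι κ ℝ}
    {F : Matrix ν ν ℝ} {H : Matrix ν μ ℝ} {K : Matrix ν κ ℝ} {G Xg Xg' : Matrix μ μ ℝ}
    {L : Matrix μ κ ℝ} {C Xc : Matrix κ κ ℝ}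
    (hF : Unᵀ * Un = F) (hH : Unᵀ * Um = H) (hK : Unᵀ * Uk = K) (hG : Umᵀ * Um = G)
    (hL : Umᵀ * Uk = L) (hC : Ukᵀ * Uk = C) (hXc : C * Xc * C = C) (hXg : G * Xg * G = G)
    (hXg' : (G - L * Xc * Lᵀ) * Xg' * (G - L * Xc * Lᵀ) = G - L * Xc * Lᵀ) :
    IsDowndate pinv (F - H * Xg * Hᵀ)
      ((F - K * Xc * Kᵀ) - (H - K * Xc * Lᵀ) * Xg' * (H - K * Xc * Lᵀ)ᵀ) := by
  subst hF hH hK hG hL hC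
  rw [← transpose_sub_gramProj_mul_sub hXc] at hXg'
  rw [← transpose_sub_gramProj_mul_sub hXc, ← transpose_sub_gramProj_mul_sub hXc]
  have hXk' := hpinv ((Uk - gramProj Um Xg * Uk)ᵀ * (Uk - gramProj Um Xg * Uk))
  refine ⟨_, Unᵀ * (Uk - gramProj Um Xg * Uk), posSemidef_transpose_mul_self _,
    exists_transpose_mul_eq_gram_mul hXk' Un, ?_, posSemidef_transpose_mul_self_sub hXg' _⟩
  have hUm' : gramProj Uk Xc * (Um - gramProj Uk Xc * Um) = 0 := by
    rw [Matrix.mul_sub, ← Matrix.mul_assoc, gramProj_mul_gramProj hXc, sub_self]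
  -- both orders of projecting give the projection onto `col Um + col Uk`
  have hQ := (isProjOnto_gramProj_add_gramProj hXc hXg').eq
    (isProjOnto_gramProj_add_gramProj hXg hXk').symm
  rw [transpose_sub_gramProj_mul_of_gramProj_mul_eq_zero hXc Un hUm',
    transpose_sub_gramProj_mul_sub hXc]
  simp only [← transpose_mul_gramProj_mul, sub_sub, ← Matrix.add_mul, ← Matrix.mul_add, hQ]

def riccatiStep {ν μ : Type*} [Fintype ν] [Fintype μ] (pinv : Matrix μ μ ℝ → Matrix μ μ ℝ)
    (A : Matrix ν ν ℝ) (B : Matrix ν μ ℝ) (Qx : Matrix ν ν ℝ) (Qxw : Matrix ν μ ℝ)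
    (Qw : Matrix μ μ ℝ) (P : Matrix ν ν ℝ) : Matrix ν ν ℝ :=
  (Qx + Aᵀ * P * A) - (Qxw + Aᵀ * P * B) * pinv (Qw + Bᵀ * P * B) * (Qxw + Aᵀ * P * B)ᵀ

theorem add_transpose_mul_sub_mul {ν κ β γ : Type*} [Fintype ν] [Fintype κ]
    (Q : Matrix β γ ℝ) (X : Matrix ν β ℝ) (P : Matrix ν ν ℝ) (V : Matrix ν κ ℝ)
    (W : Matrix κ κ ℝ) (Y : Matrix ν γ ℝ) :
    Q + Xᵀ * (P - V * W * Vᵀ) * Y = (Q + Xᵀ * P * Y) - Xᵀ * V * W * (Yᵀ * V)ᵀ := by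
  simp only [Matrix.mul_sub, Matrix.sub_mul, transpose_mul, transpose_transpose, Matrix.mul_assoc]
  abel

theorem isDowndate_riccatiStep {ν μ κ : Type*} [Fintype ν] [DecidableEq ν] [Fintype μ]
    [DecidableEq μ] [Fintype κ] [DecidableEq κ] {pinvm : Matrix μ μ ℝ → Matrix μ μ ℝ}
    {pinvk : Matrix κ κ ℝ → Matrix κ κ ℝ} (hpm : ∀ G, G * pinvm G * G = G)
    (hpk : ∀ C, C * pinvk C * C = C) {A : Matrix ν ν ℝ} {B : Matrix ν μ ℝ} {Qx : Matrix ν ν ℝ}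
    {Qxw : Matrix ν μ ℝ} {Qw : Matrix μ μ ℝ} (hQ : (fromBlocks Qx Qxw Qxwᵀ Qw).PosSemidef)
    {P Pt : Matrix ν ν ℝ} (h : IsDowndate pinvk P Pt) :
    IsDowndate pinvk (riccatiStep pinvm A B Qx Qxw Qw P) (riccatiStep pinvm A B Qx Qxw Qw Pt) := by
  obtain ⟨C, V, hC, ⟨Y, hY⟩, rfl, hPt⟩ := h
  obtain ⟨R₁, R₂, rfl, rfl, rfl⟩ := hQ.exists_fromBlocks_eq_gram
  obtain ⟨S₁, S₂, hP, hV, hCS⟩ :=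
    (posSemidef_fromBlocks_of_posSemidef_sub hC hY (hpk C) hPt).exists_fromBlocks_eq_gram
  simp only [riccatiStep, add_transpose_mul_sub_mul]
  refine isDowndate_schur_of_gram hpk (Un := fromRows R₁ (S₁ * A)) (Um := fromRows R₂ (S₁ * B))
    (Uk := fromRows 0 S₂) ?_ ?_ ?_ ?_ ?_ ?_ (hpk C) (hpm _) (hpm _)
  all_goals
    subst hP hV hCS
    simp [transpose_fromRows, fromCols_mul_fromRows, transpose_mul, Matrix.mul_assoc]

theorem riccati_downdate_induction_general {n m k : ℕ}
    (pinvm : Matrix (Fin m) (Fin m) ℝ → Matrix (Fin m) (Fin m) ℝ)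
    (pinvk : Matrix (Fin k) (Fin k) ℝ → Matrix (Fin k) (Fin k) ℝ)
    (hpm : ∀ X, IsMP X (pinvm X)) (hpk : ∀ X, IsMP X (pinvk X))
    (A : ℕ → Matrix (Fin n) (Fin n) ℝ) (B : ℕ → Matrix (Fin n) (Fin m) ℝ)
    (Qx : ℕ → Matrix (Fin n) (Fin n) ℝ) (Qxw : ℕ → Matrix (Fin n) (Fin m) ℝ)
    (Qw : ℕ → Matrix (Fin m) (Fin m) ℝ)
    (hQ : ∀ t, (Matrix.fromBlocks (Qx t) (Qxw t) (Qxw t)ᵀ (Qw t)).PosSemidef)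
    (tm : ℕ) (P Pt : ℕ → Matrix (Fin n) (Fin n) ℝ)
    (V : Matrix (Fin n) (Fin k) ℝ) (C : Matrix (Fin k) (Fin k) ℝ)
    (hC : C.PosSemidef)
    (hV : ∃ Y : Matrix (Fin k) (Fin n) ℝ, Vᵀ = C * Y)
    (hmod : Pt tm = P tm - V * pinvk C * Vᵀ)
    (hmodpsd : (Pt tm).PosSemidef)
    (hP : ∀ t < tm, P t =
      (Qx t + (A t)ᵀ * P (t+1) * A t) -
        (Qxw t + (A t)ᵀ * P (t+1) * B t) *
          pinvm (Qw t + (B t)ᵀ * P (t+1) * B t) *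
            (Qxw t + (A t)ᵀ * P (t+1) * B t)ᵀ)
    (hPt : ∀ t < tm, Pt t =
      (Qx t + (A t)ᵀ * Pt (t+1) * A t) -
        (Qxw t + (A t)ᵀ * Pt (t+1) * B t) *
          pinvm (Qw t + (B t)ᵀ * Pt (t+1) * B t) *
            (Qxw t + (A t)ᵀ * Pt (t+1) * B t)ᵀ) :
    ∀ t ≤ tm, ∃ (Ct : Matrix (Fin k) (Fin k) ℝ) (Vt : Matrix (Fin n) (Fin k) ℝ),
      Ct.PosSemidef ∧ (∃ Y : Matrix (Fin k) (Fin n) ℝ, Vtᵀ = Ct * Y) ∧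
      Pt t = P t - Vt * pinvk Ct * Vtᵀ ∧ (Pt t).PosSemidef := by
  intro t ht
  induction ht using Nat.decreasingInduction with
  | self => exact ⟨C, V, hC, hV, hmod, hmodpsd⟩
  | of_succ t ht ih =>
    show IsDowndate pinvk (P t) (Pt t)
    rw [hP t ht, hPt t ht]
    exact isDowndate_riccatiStep (fun G ↦ (hpm G).1) (fun G ↦ (hpk G).1) (hQ t) ih

theorem riccati_downdate_induction {n m k : ℕ}
    (pinvm : Matrix (Fin m) (Fin m) ℝ → Matrix (Fin m) (Fin m) ℝ)
    (pinvk : Matrix (Fin k) (Fin k) ℝ → Matrix (Fin k) (Fin k) ℝ)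
    (hpm : ∀ X, IsMP X (pinvm X)) (hpk : ∀ X, IsMP X (pinvk X))
    (A : ℕ → Matrix (Fin n) (Fin n) ℝ) (B : ℕ → Matrix (Fin n) (Fin m) ℝ)
    (Qx : ℕ → Matrix (Fin n) (Fin n) ℝ) (Qxw : ℕ → Matrix (Fin n) (Fin m) ℝ)
    (Qw : ℕ → Matrix (Fin m) (Fin m) ℝ)
    (hQ : ∀ t, (Matrix.fromBlocks (Qx t) (Qxw t) (Qxw t)ᵀ (Qw t)).PosSemidef)
    (tm : ℕ) (P Pt : ℕ → Matrix (Fin n) (Fin n) ℝ)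
    (V : Matrix (Fin n) (Fin k) ℝ) (C : Matrix (Fin k) (Fin k) ℝ)
    (hC : C.PosSemidef)
    (hV : ∃ Y : Matrix (Fin k) (Fin n) ℝ, Vᵀ = C * Y)
    (hPtm : (P tm).PosSemidef)
    (hmod : Pt tm = P tm - V * pinvk C * Vᵀ)
    (hmodpsd : (Pt tm).PosSemidef)
    (hP : ∀ t < tm, P t =
      (Qx t + (A t)ᵀ * P (t+1) * A t) -
        (Qxw t + (A t)ᵀ * P (t+1) * B t) *
          pinvm (Qw t + (B t)ᵀ * P (t+1) * B t) *
            (Qxw t + (A t)ᵀ * P (t+1) * B t)ᵀ)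
    (hPt : ∀ t < tm, Pt t =
      (Qx t + (A t)ᵀ * Pt (t+1) * A t) -
        (Qxw t + (A t)ᵀ * Pt (t+1) * B t) *
          pinvm (Qw t + (B t)ᵀ * Pt (t+1) * B t) *
            (Qxw t + (A t)ᵀ * Pt (t+1) * B t)ᵀ) :
    ∀ t ≤ tm, ∃ (Ct : Matrix (Fin k) (Fin k) ℝ) (Vt : Matrix (Fin n) (Fin k) ℝ),
      Ct.PosSemidef ∧ (∃ Y : Matrix (Fin k) (Fin n) ℝ, Vtᵀ = Ct * Y) ∧
      Pt t = P t - Vt * pinvk Ct * Vtᵀ ∧ (Pt t).PosSemidef :=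
  riccati_downdate_induction_general pinvm pinvk hpm hpk A B Qx Qxw Qw hQ tm P Pt V C hC hV hmod
    hmodpsd hP hPt
end

section
/- If P ⪰ 0, C ⪰ 0, V has range(Vᵀ) ⊆ range(C), and P - VC†Vᵀ ⪰ 0, then the bordered matrix [[Qx + AᵀPA, Qxw + AᵀPB, AᵀV],[Qxwᵀ + BᵀPA, Qw + BᵀPB, BᵀV],[VᵀA, VᵀB, C]] is positive semidefinite whenever [[Qx,Qxw],[Qxwᵀ,Qw]] ⪰ 0. -/
open Matrix

/-!
Everything is a sum of congruences `Xᵀ M X` of PSD matrices. Writing `Vᵀ = C Y`, the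
generalized inverse property `C C† C = C` gives `V C† Vᵀ = Yᵀ C Y`, so
`[[P, V], [Vᵀ, C]] = [1 0]ᵀ (P - V C† Vᵀ) [1 0] + [Y 1]ᵀ C [Y 1]` (Albert's theorem).
The bordered matrix is then the quadratic form
`(x, w, v) ↦ (x, w)ᵀ Q (x, w) + (Ax + Bw, v)ᵀ [[P, V], [Vᵀ, C]] (Ax + Bw, v)`.
-/

section

variable {ι μ κ : Type*} [Fintype ι] [Fintype μ] [Fintype κ]
  [DecidableEq ι] [DecidableEq μ] [DecidableEq κ]

theorem posSemidef_fromBlocks_of_posSemidef_schur {P : Matrix ι ι ℝ} {V : Matrix ι κ ℝ}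
    {C Cp : Matrix κ κ ℝ} {Y : Matrix κ ι ℝ} (hC : C.PosSemidef) (hY : Vᵀ = C * Y)
    (hCp : C * Cp * C = C) (hS : (P - V * Cp * Vᵀ).PosSemidef) :
    (fromBlocks P V Vᵀ C).PosSemidef := by
  have hV : V = Yᵀ * C := by
    rw [← transpose_transpose V, hY, transpose_mul, ← conjTranspose_eq_transpose_of_trivial C,
      hC.isHermitian.eq]
  have hVCV : V * Cp * Vᵀ = Yᵀ * C * Y :=
    calc V * Cp * Vᵀ = Yᵀ * (C * Cp * C) * Y := by rw [hY, hV]; simp only [Matrix.mul_assoc]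
      _ = Yᵀ * C * Y := by rw [hCp]
  have hsum : fromBlocks P V Vᵀ C =
      (fromCols 1 0 : Matrix ι (ι ⊕ κ) ℝ)ᵀ * (P - V * Cp * Vᵀ)
          * (fromCols 1 0 : Matrix ι (ι ⊕ κ) ℝ)
        + (fromCols Y 1 : Matrix κ (ι ⊕ κ) ℝ)ᵀ * C * fromCols Y 1 := by
    rw [hVCV, hY, hV]
    simp only [transpose_fromCols, transpose_one, transpose_zero, fromRows_mul, mul_fromCols,
      Matrix.one_mul, Matrix.zero_mul, Matrix.mul_one, Matrix.mul_zero]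
    ext (i | i) (j | j) <;> simp
  rw [hsum]
  exact (hS.conjTranspose_mul_mul_same _).add (hC.conjTranspose_mul_mul_same _)

theorem bordered_eq_transpose_mul_mul_add (A : Matrix ι ι ℝ) (B : Matrix ι μ ℝ)
    (P Qx : Matrix ι ι ℝ) (Qxw : Matrix ι μ ℝ) (Qw : Matrix μ μ ℝ) (V : Matrix ι κ ℝ)
    (C : Matrix κ κ ℝ) :
    fromBlocks (Qx + Aᵀ * P * A) (fromCols (Qxw + Aᵀ * P * B) (Aᵀ * V))
        (fromRows (Qxwᵀ + Bᵀ * P * A) (Vᵀ * A))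
        (fromBlocks (Qw + Bᵀ * P * B) (Bᵀ * V) (Vᵀ * B) C) =
      (fromBlocks 1 0 0 (fromCols 1 0) : Matrix (ι ⊕ μ) (ι ⊕ (μ ⊕ κ)) ℝ)ᵀ
          * fromBlocks Qx Qxw Qxwᵀ Qw
          * (fromBlocks 1 0 0 (fromCols 1 0) : Matrix (ι ⊕ μ) (ι ⊕ (μ ⊕ κ)) ℝ)
        + (fromBlocks A (fromCols B 0) 0 (fromCols 0 1) : Matrix (ι ⊕ κ) (ι ⊕ (μ ⊕ κ)) ℝ)ᵀ
          * fromBlocks P V Vᵀ C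
          * (fromBlocks A (fromCols B 0) 0 (fromCols 0 1) : Matrix (ι ⊕ κ) (ι ⊕ (μ ⊕ κ)) ℝ) := by
  simp only [fromBlocks_transpose, transpose_fromCols, transpose_one, transpose_zero,
    fromBlocks_multiply, fromRows_mul, mul_fromCols, Matrix.mul_one, Matrix.one_mul,
    Matrix.mul_zero, Matrix.zero_mul, add_zero, Matrix.add_mul, Matrix.mul_assoc]
  ext (i | i | i) (j | j | j) <;> simp

end

theorem bordered_M_hat_psd_general {n m k : ℕ}
    (A : Matrix (Fin n) (Fin n) ℝ) (B : Matrix (Fin n) (Fin m) ℝ)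
    (P : Matrix (Fin n) (Fin n) ℝ)
    (Qx : Matrix (Fin n) (Fin n) ℝ) (Qxw : Matrix (Fin n) (Fin m) ℝ)
    (Qw : Matrix (Fin m) (Fin m) ℝ)
    (V : Matrix (Fin n) (Fin k) ℝ) (C Cp : Matrix (Fin k) (Fin k) ℝ)
    (hC : C.PosSemidef)
    (hV : ∃ Y : Matrix (Fin k) (Fin n) ℝ, Vᵀ = C * Y)
    (hCp : IsMP C Cp)
    (hPt : (P - V * Cp * Vᵀ).PosSemidef)
    (hQ : (Matrix.fromBlocks Qx Qxw Qxwᵀ Qw).PosSemidef) :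
    (Matrix.fromBlocks (Qx + Aᵀ * P * A)
      (Matrix.fromCols (Qxw + Aᵀ * P * B) (Aᵀ * V))
      (Matrix.fromRows (Qxwᵀ + Bᵀ * P * A) (Vᵀ * A))
      (Matrix.fromBlocks (Qw + Bᵀ * P * B) (Bᵀ * V) (Vᵀ * B) C)).PosSemidef := by
  obtain ⟨Y, hY⟩ := hV
  have hN : (fromBlocks P V Vᵀ C).PosSemidef :=
    posSemidef_fromBlocks_of_posSemidef_schur hC hY hCp.1 hPt
  rw [bordered_eq_transpose_mul_mul_add]
  exact (hQ.conjTranspose_mul_mul_same _).add (hN.conjTranspose_mul_mul_same _)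

theorem bordered_M_hat_psd {n m k : ℕ}
    (A : Matrix (Fin n) (Fin n) ℝ) (B : Matrix (Fin n) (Fin m) ℝ)
    (P : Matrix (Fin n) (Fin n) ℝ)
    (Qx : Matrix (Fin n) (Fin n) ℝ) (Qxw : Matrix (Fin n) (Fin m) ℝ)
    (Qw : Matrix (Fin m) (Fin m) ℝ)
    (V : Matrix (Fin n) (Fin k) ℝ) (C Cp : Matrix (Fin k) (Fin k) ℝ)
    (hP : P.PosSemidef) (hC : C.PosSemidef)
    (hV : ∃ Y : Matrix (Fin k) (Fin n) ℝ, Vᵀ = C * Y)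
    (hCp : IsMP C Cp)
    (hPt : (P - V * Cp * Vᵀ).PosSemidef)
    (hQ : (Matrix.fromBlocks Qx Qxw Qxwᵀ Qw).PosSemidef) :
    (Matrix.fromBlocks (Qx + Aᵀ * P * A)
      (Matrix.fromCols (Qxw + Aᵀ * P * B) (Aᵀ * V))
      (Matrix.fromRows (Qxwᵀ + Bᵀ * P * A) (Vᵀ * A))
      (Matrix.fromBlocks (Qw + Bᵀ * P * B) (Bᵀ * V) (Vᵀ * B) C)).PosSemidef :=
  bordered_M_hat_psd_general A B P Qx Qxw Qw V C Cp hC hV hCp hPt hQ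
end
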